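/- arXiv:2301.01116 — 3 statements merged into one kernel-verified Lean document; each statement's English description precedes it below -/
import Mathlib

section
/- For each n ≥ 3, the set S_{n,n−1} consists exactly of the two words (1,…,1,2,1) and (1,…,1,2,2) (ones in the first n−2 positions, then 2, then an arbitrary last letter). -/
def dirStep (X : List ℕ) (k t : ℕ) : List ℕ :=
  let X' := X ++ [t]
  X' ++ List.replicate (X'.getD k 1 - 1) t

/-- The word directed by the finite directing word `T`: at step `i` (0-indexed),
append `t_i` followed by `X[i] - 1` further copies of `t_i`. -/
def dirWord (T : List ℕ) : List ℕ :=
  (T.foldl (fun p t => (dirStep p.1 p.2 t, p.2 + 1)) (([] : List ℕ), 0)).1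

/-- The `n`-th letter (1-indexed) of the infinite sequence directed by `T`
(whose meaningful indices are `1, 2, …`). -/
def dirSeq (T : ℕ → ℕ) (n : ℕ) : ℕ :=
  (dirWord (List.ofFn fun i : Fin n => T (i + 1))).getD (n - 1) 0

/-- `Snk n k` : the set of directing words `(t_1,…,t_n) ∈ {1,2}^n` such that the
minimal `j ∈ [1,n]` with `Σ_i [O_{t_1…t_j}]_i ≥ n` equals `k`. -/
def Snk (n k : ℕ) : Set (List ℕ) :=
  {T | T.length = n ∧ (∀ t ∈ T, t = 1 ∨ t = 2) ∧
    IsLeast {j | 1 ≤ j ∧ j ≤ n ∧ n ≤ (dirWord (T.take j)).sum} k}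

lemma foldl_snd (T : List ℕ) (w : List ℕ) (k : ℕ) :
    (T.foldl (fun p t => (dirStep p.1 p.2 t, p.2 + 1)) (w, k)).2 = k + T.length := by
  induction T generalizing w k with
  | nil => simp
  | cons t T ih => simp only [List.foldl_cons, ih, List.length_cons]; omega

lemma foldl_eq (T : List ℕ) :
    T.foldl (fun p t => (dirStep p.1 p.2 t, p.2 + 1)) (([] : List ℕ), 0)
      = (dirWord T, T.length) := by
  have h := foldl_snd T [] 0
  refine Prod.ext rfl ?_
  simpa using h

lemma dirWord_append_singleton (T : List ℕ) (t : ℕ) :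
    dirWord (T ++ [t]) = dirStep (dirWord T) T.length t := by
  unfold dirWord
  rw [List.foldl_append, foldl_eq]
  rfl

lemma dirWord_replicate_one (p : ℕ) :
    dirWord (List.replicate p 1) = List.replicate p 1 := by
  induction p with
  | zero => rfl
  | succ p ih =>
      have : List.replicate (p+1) 1 = List.replicate p 1 ++ [1] := by
        simp [List.replicate_succ' ]
      rw [this, dirWord_append_singleton, ih]
      simp [dirStep, List.replicate_succ']

lemma dirWord_ones_two (p : ℕ) :
    dirWord (List.replicate p 1 ++ [2]) = List.replicate p 1 ++ [2, 2] := by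
  rw [dirWord_append_singleton, dirWord_replicate_one]
  simp [dirStep]

lemma sum_dirStep_ge (X : List ℕ) (k t : ℕ) (ht : 1 ≤ t) :
    X.sum + 1 ≤ (dirStep X k t).sum := by
  simp only [dirStep, List.sum_append, List.sum_replicate, smul_eq_mul, List.sum_cons,
    List.sum_nil]
  omega

lemma sum_take_succ (T : List ℕ) (ht : ∀ t ∈ T, 1 ≤ t) (j : ℕ) (hj : j < T.length) :
    (dirWord (T.take j)).sum + 1 ≤ (dirWord (T.take (j+1))).sum := by
  have h1 : T.take (j+1) = T.take j ++ [T[j]] := by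
    rw [← List.take_concat_get, List.concat_eq_append]
  rw [h1, dirWord_append_singleton]
  exact sum_dirStep_ge _ _ _ (ht _ (List.getElem_mem hj))

lemma sum_take_ge (T : List ℕ) (ht : ∀ t ∈ T, 1 ≤ t) (j₀ j : ℕ) (hj₀ : j₀ ≤ j)
    (hj : j ≤ T.length) :
    (dirWord (T.take j₀)).sum + (j - j₀) ≤ (dirWord (T.take j)).sum := by
  induction j with
  | zero =>
      have : j₀ = 0 := by omega
      subst this; simp
  | succ j ih =>
      rcases Nat.lt_or_ge j₀ (j+1) with h | h
      · have h2 := sum_take_succ T ht j (by omega)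
        have h3 := ih (by omega) (by omega)
        omega
      · have : j₀ = j + 1 := by omega
        subst this
        simp

lemma struct (T : List ℕ) (h : ∀ t ∈ T, t = 1 ∨ t = 2) :
    T = List.replicate T.length 1 ∨ ∃ p rest, T = List.replicate p 1 ++ 2 :: rest := by
  induction T with
  | nil => left; rfl
  | cons t T ih =>
      rcases h t (by simp) with rfl | rfl
      · rcases ih (fun x hx => h x (by simp [hx])) with h1 | ⟨p, rest, h1⟩
        · left; rw [List.length_cons, List.replicate_succ, ← h1]
        · right; exact ⟨p+1, rest, by rw [List.replicate_succ]; simp [h1]⟩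
      · right; exact ⟨0, T, rfl⟩

lemma take_struct_le (p j : ℕ) (rest : List ℕ) (hj : j ≤ p) :
    (List.replicate p 1 ++ 2 :: rest).take j = List.replicate j 1 := by
  rw [List.take_append]
  simp [List.take_replicate, Nat.sub_eq_zero_of_le hj, Nat.min_eq_left hj]

lemma take_struct_succ (p : ℕ) (rest : List ℕ) :
    (List.replicate p 1 ++ 2 :: rest).take (p+1) = List.replicate p 1 ++ [2] := by
  rw [List.take_append]
  simp [List.take_replicate]

lemma sum_dirWord_ones (p : ℕ) : (dirWord (List.replicate p 1)).sum = p := by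
  rw [dirWord_replicate_one]; simp

lemma sum_dirWord_ones_two (p : ℕ) :
    (dirWord (List.replicate p 1 ++ [2])).sum = p + 4 := by
  rw [dirWord_ones_two]
  simp [List.sum_append]

/-- for n ≥ 3, S_{n,n-1} = {(1,…,1,2,1), (1,…,1,2,2)}. -/
theorem stmt6 (n : ℕ) (hn : 3 ≤ n) :
    Snk n (n - 1) =
      {List.replicate (n - 2) 1 ++ [2, 1], List.replicate (n - 2) 1 ++ [2, 2]} := by
  obtain ⟨m, rfl⟩ : ∃ m, n = m + 3 := ⟨n - 3, by omega⟩
  have e1 : m + 3 - 1 = m + 2 := rfl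
  have e2 : m + 3 - 2 = m + 1 := rfl
  rw [e1, e2]
  ext T
  simp only [Set.mem_insert_iff, Set.mem_singleton_iff]
  constructor
  · rintro ⟨hlen, hmem, hleast⟩
    have hpos : ∀ t ∈ T, 1 ≤ t := fun t ht => by rcases hmem t ht with rfl | rfl <;> omega
    rcases struct T hmem with hT | ⟨p, rest, hT⟩
    · -- all ones: contradiction from membership of m+2
      exfalso
      have h1 := hleast.1.2.2
      rw [hT, hlen] at h1
      rw [List.take_replicate, Nat.min_eq_left (by omega)] at h1
      rw [sum_dirWord_ones] at h1
      omega
    · have hlen' : p + (rest.length + 1) = m + 3 := by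
        have := hlen
        rw [hT] at this
        simpa using this
      rcases Nat.lt_or_ge p (m+1) with hp | hp
      · -- p ≤ m : contradiction, sum at take (m+1) already ≥ m+3
        exfalso
        have h1 : (dirWord (T.take (p+1))).sum = p + 4 := by
          rw [hT, take_struct_succ, sum_dirWord_ones_two]
        have h2 := sum_take_ge T hpos (p+1) (m+1) (by omega) (by omega)
        have h3 : m + 2 ≤ m + 1 :=
          hleast.2 ⟨by omega, by omega, by omega⟩
        omega
      · rcases Nat.lt_or_ge p (m+2) with hp2 | hp2
        · -- p = m + 1 : the good case
          have hpe : p = m + 1 := by omega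
          subst hpe
          have hr : rest.length = 1 := by omega
          obtain ⟨a, rfl⟩ := List.length_eq_one_iff.mp hr
          rcases hmem a (by rw [hT]; simp) with rfl | rfl
          · left; rw [hT]
          · right; rw [hT]
        · -- p = m + 2, rest = [] : contradiction
          exfalso
          have hpe : p = m + 2 := by omega
          subst hpe
          have h1 := hleast.1.2.2
          rw [hT, take_struct_le (m+2) (m+2) rest (le_refl _), sum_dirWord_ones] at h1
          omega
  · intro h
    have key : ∀ a, a = 1 ∨ a = 2 →
        List.replicate (m+1) 1 ++ [2, a] ∈ Snk (m+3) (m+2) := by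
      intro a ha
      have hT : List.replicate (m+1) 1 ++ [2, a] = List.replicate (m+1) 1 ++ 2 :: [a] := rfl
      refine ⟨by simp, ?_, ⟨⟨by omega, by omega, ?_⟩, ?_⟩⟩
      · intro t ht
        simp only [List.mem_append, List.mem_replicate, List.mem_cons] at ht
        rcases ht with ⟨-, rfl⟩ | rfl | h2
        · left; rfl
        · right; rfl
        · simp at h2; subst h2; exact ha
      · rw [hT, take_struct_succ, sum_dirWord_ones_two]; omega
      · rintro j ⟨hj1, hj2, hj3⟩
        by_contra hlt
        push_neg at hlt
        have hjle : j ≤ m + 1 := by omega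
        rw [hT, take_struct_le (m+1) j [a] hjle, sum_dirWord_ones] at hj3
        omega
    rcases h with rfl | rfl
    · exact key 1 (Or.inl rfl)
    · exact key 2 (Or.inr rfl)
end

section
/- Let T be i.i.d. over {1,2} with P(T_n = 1) = p ∈ (0,1) and X = O_T. Then for all m ≥ 1 and n ≥ m + 2, P(X_m = 2 and X_n = 1) = p · P(X_m = 2); i.e., the event {X_n = 1} is independent of {X_m = 2} at distance ≥ 2. -/
open MeasureTheory ProbabilityTheory Filter

/-!
Write `X = dirSeq T`. Position `n` lies in the block written at some step `j + 1`, and there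
`X n = T (j + 1)`. When moreover `X m = 2` with `m + 2 ≤ n`, both position `m` and position
`j + 1` (whose letter is the length of that block) lie in the first `j` blocks, so the event
`{X m = 2, n lies in block j + 1}` is determined by `T 1, …, T j`, hence independent of
`T (j + 1)`. Summing over `j` gives the claim; values of `T` outside `{1, 2}` only occur on a
null set.
-/

/-- The word directed by `t 1, …, t k`; its length is the end of the `k`-th block of
`dirSeq t`. -/
def dirPrefix (t : ℕ → ℕ) (k : ℕ) : List ℕ :=
  dirWord (List.ofFn fun i : Fin k => t (i + 1))

/-- Position `n` of `dirSeq t` lies in the block written at step `j + 1`. -/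
def inBlock (n j : ℕ) : Set (ℕ → ℕ) :=
  {t | (dirPrefix t j).length < n ∧ n ≤ (dirPrefix t (j + 1)).length}

lemma snd_foldl_dirStep (L X : List ℕ) (k : ℕ) :
    (L.foldl (fun p a => (dirStep p.1 p.2 a, p.2 + 1)) (X, k)).2 = k + L.length := by
  induction L generalizing X k with
  | nil => simp
  | cons a L ih => simp only [List.foldl_cons, ih, List.length_cons]; omega

lemma dirWord_append_singleton_s11 (L : List ℕ) (a : ℕ) :
    dirWord (L ++ [a]) = dirStep (dirWord L) L.length a := by
  simp only [dirWord, List.foldl_append, List.foldl_cons, List.foldl_nil]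
  rw [snd_foldl_dirStep, zero_add]

section Prefix

variable (t : ℕ → ℕ)

@[simp] lemma dirPrefix_zero : dirPrefix t 0 = [] := rfl

lemma dirPrefix_succ (k : ℕ) :
    dirPrefix t (k + 1) = dirStep (dirPrefix t k) k (t (k + 1)) := by
  rw [dirPrefix, List.ofFn_succ_last, dirWord_append_singleton_s11, List.length_ofFn]
  rfl

lemma le_length_dirPrefix (k : ℕ) : k ≤ (dirPrefix t k).length := by
  induction k with
  | zero => simp
  | succ k ih =>
    simp only [dirPrefix_succ, dirStep, List.length_append, List.length_singleton,
      List.length_replicate]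
    omega

lemma dirPrefix_isPrefix {k l : ℕ} (h : k ≤ l) : dirPrefix t k <+: dirPrefix t l := by
  induction l, h using Nat.le_induction with
  | base => exact List.prefix_refl _
  | succ l _ ih =>
    rw [dirPrefix_succ, dirStep, List.append_assoc]
    exact ih.trans (List.prefix_append _ _)

lemma dirSeq_eq_getD {q k : ℕ} (hq : 1 ≤ q) (h : q ≤ (dirPrefix t k).length) :
    dirSeq t q = (dirPrefix t k).getD (q - 1) 0 := by
  change (dirPrefix t q).getD (q - 1) 0 = _
  have := le_length_dirPrefix t q
  rcases le_total q k with hqk | hkq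
  · obtain ⟨r, hr⟩ := dirPrefix_isPrefix t hqk
    rw [← hr, List.getD_append _ _ _ _ (by omega)]
  · obtain ⟨r, hr⟩ := dirPrefix_isPrefix t hkq
    rw [← hr, List.getD_append _ _ _ _ (by omega)]

lemma dirPrefix_congr {t' : ℕ → ℕ} {k : ℕ} (h : ∀ i, 1 ≤ i → i ≤ k → t i = t' i) :
    dirPrefix t k = dirPrefix t' k := by
  simp only [dirPrefix]
  congr 2
  ext i
  exact h _ (by omega) i.isLt

lemma forall_mem_dirPrefix {P : ℕ → Prop} (hP : ∀ i, 1 ≤ i → P (t i)) (k : ℕ) :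
    ∀ x ∈ dirPrefix t k, P x := by
  induction k with
  | zero => simp
  | succ k ih =>
    intro x hx
    simp only [dirPrefix_succ, dirStep, List.mem_append, List.mem_singleton,
      List.mem_replicate] at hx
    rcases hx with (hx | rfl) | ⟨-, rfl⟩
    exacts [ih x hx, hP _ (by omega), hP _ (by omega)]

lemma dirSeq_of_forall {P : ℕ → Prop} (hP : ∀ i, 1 ≤ i → P (t i)) {q : ℕ}
    (hq : 1 ≤ q) : P (dirSeq t q) := by
  have hlt : q - 1 < (dirPrefix t q).length := by have := le_length_dirPrefix t q; omega
  change P ((dirPrefix t q).getD (q - 1) 0)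
  rw [List.getD_eq_getElem _ _ hlt]
  exact forall_mem_dirPrefix t hP q _ (List.getElem_mem hlt)

end Prefix

section Blocks

variable {t : ℕ → ℕ}

lemma dirPrefix_succ_eq_append_replicate (hpos : ∀ i, 1 ≤ i → 1 ≤ t i) (k : ℕ) :
    dirPrefix t (k + 1) = dirPrefix t k ++ List.replicate (dirSeq t (k + 1)) (t (k + 1)) := by
  have hlen : k < (dirPrefix t k ++ [t (k + 1)]).length := by
    have := le_length_dirPrefix t k
    simp only [List.length_append, List.length_singleton]
    omega
  -- the length of block `k + 1` is read off the word before that block is written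
  have hread : dirSeq t (k + 1) = (dirPrefix t k ++ [t (k + 1)]).getD k 1 := by
    change (dirPrefix t (k + 1)).getD k 0 = _
    rw [dirPrefix_succ, dirStep, List.getD_append _ _ _ _ hlen, List.getD_eq_getElem _ _ hlen,
      List.getD_eq_getElem _ _ hlen]
  obtain ⟨c, hc⟩ : ∃ c, dirSeq t (k + 1) = c + 1 :=
    Nat.exists_eq_add_one.2 (dirSeq_of_forall t hpos (Nat.le_add_left 1 k))
  rw [dirPrefix_succ, dirStep, ← hread, hc, List.replicate_succ, List.append_assoc]
  simp

lemma length_dirPrefix_succ (hpos : ∀ i, 1 ≤ i → 1 ≤ t i) (k : ℕ) :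
    (dirPrefix t (k + 1)).length = (dirPrefix t k).length + dirSeq t (k + 1) := by
  rw [dirPrefix_succ_eq_append_replicate hpos, List.length_append, List.length_replicate]

lemma dirSeq_eq_of_mem_inBlock (hpos : ∀ i, 1 ≤ i → 1 ≤ t i) {n j : ℕ}
    (h : t ∈ inBlock n j) : dirSeq t n = t (j + 1) := by
  obtain ⟨h1, h2⟩ := h
  have hlen := length_dirPrefix_succ hpos j
  rw [dirSeq_eq_getD t (by omega) h2, dirPrefix_succ_eq_append_replicate hpos,
    List.getD_append_right _ _ _ _ (by omega),
    List.getD_eq_getElem _ _ (by rw [List.length_replicate]; omega), List.getElem_replicate]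

lemma length_dirPrefix_add_sub_le (hpos : ∀ i, 1 ≤ i → 1 ≤ t i) {k l : ℕ} (h : k ≤ l) :
    (dirPrefix t k).length + (l - k) ≤ (dirPrefix t l).length := by
  induction l, h using Nat.le_induction with
  | base => simp
  | succ l hkl ih =>
    have := dirSeq_of_forall t hpos (Nat.le_add_left 1 l)
    rw [length_dirPrefix_succ hpos]
    omega

end Blocks

lemma pairwise_disjoint_inBlock (n : ℕ) : Pairwise (Function.onFun Disjoint (inBlock n)) := by
  refine (pairwise_disjoint_on _).2 fun j j' hjj' => Set.disjoint_left.2 ?_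
  rintro t ⟨-, hn⟩ ⟨hn', -⟩
  have := (dirPrefix_isPrefix t (show j + 1 ≤ j' from hjj')).length_le
  omega

lemma iUnion_inBlock {n : ℕ} (hn : 1 ≤ n) :
    ⋃ j ∈ Finset.range n, inBlock n j = Set.univ := by
  refine Set.eq_univ_of_forall fun t => ?_
  have hex : ∃ k, n ≤ (dirPrefix t k).length := ⟨n, le_length_dirPrefix t n⟩
  have hpos : Nat.find hex ≠ 0 := fun h0 => by
    have := Nat.find_spec hex
    rw [h0, dirPrefix_zero, List.length_nil] at this
    omega
  obtain ⟨j, hj⟩ := Nat.exists_eq_add_one.2 (Nat.pos_of_ne_zero hpos)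
  have hjn : j < n := by
    have := Nat.find_min' hex (le_length_dirPrefix t n)
    omega
  have hlt : (dirPrefix t j).length < n := by
    have := Nat.find_min hex (show j < Nat.find hex by omega)
    omega
  refine Set.mem_biUnion (Finset.mem_range.2 hjn) ⟨hlt, ?_⟩
  rw [← hj]
  exact Nat.find_spec hex

section Directing

variable {t t' : ℕ → ℕ} {m n j : ℕ}

lemma le_length_dirPrefix_of_dirSeq_eq_two (ht : ∀ i, 1 ≤ i → t i = 1 ∨ t i = 2)
    (hm : 1 ≤ m) (hmn : m + 2 ≤ n) (h2 : dirSeq t m = 2) (hb : t ∈ inBlock n j) :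
    m ≤ (dirPrefix t j).length ∧ j + 1 ≤ (dirPrefix t j).length := by
  have hpos : ∀ i, 1 ≤ i → 1 ≤ t i := fun i hi => by have := ht i hi; omega
  have hle2 : dirSeq t (j + 1) ≤ 2 :=
    dirSeq_of_forall t (P := (· ≤ 2)) (fun i hi => by have := ht i hi; omega) (by omega)
  have hb2 := hb.2
  rw [length_dirPrefix_succ hpos] at hb2
  refine ⟨by omega, ?_⟩
  rcases lt_or_ge j m with hjm | hmj
  · omega
  · -- a letter `2` at position `m ≤ j` makes the first `j` blocks longer than `j`
    have hmj' := length_dirPrefix_add_sub_le hpos hmj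
    have hm' := length_dirPrefix_add_sub_le hpos (Nat.sub_le m 1)
    obtain ⟨k, rfl⟩ := Nat.exists_eq_add_one.2 hm
    rw [length_dirPrefix_succ hpos, h2] at hmj'
    have := le_length_dirPrefix t k
    omega

lemma dirSeq_eq_two_and_mem_inBlock_of_eqOn (ht : ∀ i, 1 ≤ i → t i = 1 ∨ t i = 2)
    (hpos' : ∀ i, 1 ≤ i → 1 ≤ t' i) (hagree : ∀ i, 1 ≤ i → i ≤ j → t i = t' i)
    (hm : 1 ≤ m) (hmn : m + 2 ≤ n) (h : dirSeq t m = 2 ∧ t ∈ inBlock n j) :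
    dirSeq t' m = 2 ∧ t' ∈ inBlock n j := by
  obtain ⟨h2, hb1, hb2⟩ := h
  have hpos : ∀ i, 1 ≤ i → 1 ≤ t i := fun i hi => by have := ht i hi; omega
  obtain ⟨hmP, hjP⟩ := le_length_dirPrefix_of_dirSeq_eq_two ht hm hmn h2 ⟨hb1, hb2⟩
  have hP : dirPrefix t j = dirPrefix t' j := dirPrefix_congr t hagree
  have hread : ∀ q, 1 ≤ q → q ≤ (dirPrefix t j).length → dirSeq t' q = dirSeq t q :=
    fun q hq hqj => by
      rw [dirSeq_eq_getD t hq hqj, dirSeq_eq_getD t' hq (hP ▸ hqj), hP]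
  refine ⟨(hread m hm hmP).trans h2, hP ▸ hb1, ?_⟩
  rw [length_dirPrefix_succ hpos', ← hP, hread (j + 1) (Nat.le_add_left 1 j) hjP,
    ← length_dirPrefix_succ hpos]
  exact hb2

lemma dirSeq_eq_two_and_mem_inBlock_iff_of_eqOn (ht : ∀ i, 1 ≤ i → t i = 1 ∨ t i = 2)
    (ht' : ∀ i, 1 ≤ i → t' i = 1 ∨ t' i = 2)
    (hagree : ∀ i, 1 ≤ i → i ≤ j → t i = t' i) (hm : 1 ≤ m) (hmn : m + 2 ≤ n) :
    dirSeq t m = 2 ∧ t ∈ inBlock n j ↔ dirSeq t' m = 2 ∧ t' ∈ inBlock n j :=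
  ⟨dirSeq_eq_two_and_mem_inBlock_of_eqOn ht
      (fun i hi => by have := ht' i hi; omega) hagree hm hmn,
    dirSeq_eq_two_and_mem_inBlock_of_eqOn ht'
      (fun i hi => by have := ht i hi; omega) (fun i hi hij => (hagree i hi hij).symm) hm hmn⟩

end Directing

lemma measurable_dirSeq (q : ℕ) : Measurable fun t : ℕ → ℕ => dirSeq t q :=
  (measurable_of_countable fun v : Fin q → ℕ => (dirWord (List.ofFn v)).getD (q - 1) 0).comp
    (measurable_pi_lambda _ fun _ => measurable_pi_apply _)

lemma measurable_length_dirPrefix (k : ℕ) :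
    Measurable fun t : ℕ → ℕ => (dirPrefix t k).length :=
  (measurable_of_countable fun v : Fin k → ℕ => (dirWord (List.ofFn v)).length).comp
    (measurable_pi_lambda _ fun _ => measurable_pi_apply _)

lemma measurableSet_inBlock (n j : ℕ) : MeasurableSet (inBlock n j) :=
  (measurable_length_dirPrefix j measurableSet_Iio).inter
    (measurable_length_dirPrefix (j + 1) measurableSet_Ici)

section Probability

variable {Ω : Type*} [MeasurableSpace Ω] {μ : Measure Ω}

lemma ProbabilityTheory.iIndepFun.measure_inter_preimage_succ_eq_mul {β : Type*}
    [MeasurableSpace β] {T : ℕ → Ω → β} (hindep : iIndepFun T μ)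
    (hmeas : ∀ i, Measurable (T i)) (j : ℕ) (c : β) {s : Set (ℕ → β)}
    (hs : MeasurableSet s) {B : Set β} (hB : MeasurableSet B) :
    μ ({ω | (fun i => if i ≤ j then T i ω else c) ∈ s} ∩ T (j + 1) ⁻¹' B) =
      μ {ω | (fun i => if i ≤ j then T i ω else c) ∈ s} * μ (T (j + 1) ⁻¹' B) := by
  have hind := indep_iSup_of_disjoint (fun i => (hmeas i).comap_le) hindep.iIndep
    (Set.disjoint_singleton_right.2 (by simp : j + 1 ∉ Set.Iic j))
  have hle : ∀ i, i ≤ j → MeasurableSpace.comap (T i) ‹_› ≤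
      ⨆ i ∈ Set.Iic j, MeasurableSpace.comap (T i) ‹_› :=
    le_iSup₂ (f := fun i (_ : i ∈ Set.Iic j) => MeasurableSpace.comap (T i) _)
  have hZ : Measurable[⨆ i ∈ Set.Iic j, MeasurableSpace.comap (T i) ‹_›]
      (fun ω i => if i ≤ j then T i ω else c) := by
    refine @measurable_pi_lambda _ _ _ (_) _ _ fun i => ?_
    split_ifs with hi
    · exact (comap_measurable (T i)).mono (hle i hi) le_rfl
    · exact measurable_const
  refine (Indep_iff _ _ μ).1 hind _ _ (hZ hs) ?_
  exact (comap_measurable (T (j + 1))).mono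
    (le_iSup₂ (f := fun i (_ : i ∈ ({j + 1} : Set ℕ)) => MeasurableSpace.comap (T i) _)
      (j + 1) rfl) le_rfl hB

lemma ae_eq_one_or_eq_two [IsProbabilityMeasure μ] {T : ℕ → Ω → ℕ}
    (hmeas : ∀ n, Measurable (T n)) {p : ℝ}
    (h1 : ∀ n, 1 ≤ n → μ {ω | T n ω = 1} = ENNReal.ofReal p)
    (h2 : ∀ n, 1 ≤ n → μ {ω | T n ω = 2} = ENNReal.ofReal (1 - p)) :
    ∀ᵐ ω ∂μ, ∀ i, 1 ≤ i → T i ω = 1 ∨ T i ω = 2 := by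
  refine ae_all_iff.2 fun i => ?_
  by_cases hi : 1 ≤ i
  swap
  · exact ae_of_all _ fun _ h => absurd h hi
  have hs2 : MeasurableSet {ω | T i ω = 2} := hmeas i (measurableSet_singleton 2)
  have hs : MeasurableSet {ω | T i ω = 1 ∨ T i ω = 2} :=
    (hmeas i (measurableSet_singleton 1)).union hs2
  have hdisj : Disjoint {ω | T i ω = 1} {ω | T i ω = 2} :=
    Set.disjoint_left.2 fun ω h h' => by simp_all
  have hprob : μ {ω | T i ω = 1 ∨ T i ω = 2} = 1 := by
    refine le_antisymm prob_le_one ?_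
    calc (1 : ENNReal) = ENNReal.ofReal (p + (1 - p)) := by simp
      _ ≤ ENNReal.ofReal p + ENNReal.ofReal (1 - p) := ENNReal.ofReal_add_le
      _ = μ {ω | T i ω = 1 ∨ T i ω = 2} := by
        rw [← h1 i hi, ← h2 i hi, ← measure_union hdisj hs2]
        rfl
  exact (ae_iff.2 ((prob_compl_eq_zero_iff hs).2 hprob)).mono fun _ h _ => h

lemma measure_eq_sum_inter_inBlock {Y : Ω → ℕ → ℕ} (hY : Measurable Y) {s : Set Ω}
    (hs : MeasurableSet s) {n : ℕ} (hn : 1 ≤ n) :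
    μ s = ∑ j ∈ Finset.range n, μ (s ∩ Y ⁻¹' inBlock n j) := by
  rw [← measure_biUnion_finset]
  · rw [← Set.inter_iUnion₂, ← Set.preimage_iUnion₂, iUnion_inBlock hn, Set.preimage_univ,
      Set.inter_univ]
  · exact fun j _ j' _ hjj' => ((pairwise_disjoint_inBlock n hjj').preimage Y).mono
      Set.inter_subset_right Set.inter_subset_right
  · exact fun j _ => hs.inter (hY (measurableSet_inBlock n j))

lemma measure_inter_inBlock_eq_mul {T : ℕ → Ω → ℕ} (hmeas : ∀ n, Measurable (T n))
    (hindep : iIndepFun T μ) (hgood : ∀ᵐ ω ∂μ, ∀ i, 1 ≤ i → T i ω = 1 ∨ T i ω = 2)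
    {p : ℝ} (h1 : ∀ n, 1 ≤ n → μ {ω | T n ω = 1} = ENNReal.ofReal p) {m n : ℕ} (hm : 1 ≤ m)
    (hmn : m + 2 ≤ n) (j : ℕ) :
    μ ({ω | dirSeq (fun k => T k ω) m = 2} ∩ {ω | dirSeq (fun k => T k ω) n = 1} ∩
        (fun ω k => T k ω) ⁻¹' inBlock n j) =
      ENNReal.ofReal p * μ ({ω | dirSeq (fun k => T k ω) m = 2} ∩
        (fun ω k => T k ω) ⁻¹' inBlock n j) := by
  -- the event is decided by `T 1, …, T j`: it is unchanged when `T (j + 1), …` are set to `1`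
  set E := {ω | (fun i => if i ≤ j then T i ω else 1) ∈ {t | dirSeq t m = 2} ∩ inBlock n j}
  have hE : ∀ᵐ ω ∂μ,
      (dirSeq (fun k => T k ω) m = 2 ∧ (fun k => T k ω) ∈ inBlock n j ↔ ω ∈ E) := by
    filter_upwards [hgood] with ω hω
    refine dirSeq_eq_two_and_mem_inBlock_iff_of_eqOn hω (fun i hi => ?_)
      (fun i _ hij => (if_pos hij).symm) hm hmn
    split_ifs
    exacts [hω i hi, Or.inl rfl]
  have hEB : ∀ᵐ ω ∂μ,
      ((dirSeq (fun k => T k ω) m = 2 ∧ dirSeq (fun k => T k ω) n = 1) ∧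
        (fun k => T k ω) ∈ inBlock n j ↔ ω ∈ E ∧ T (j + 1) ω = 1) := by
    filter_upwards [hgood, hE] with ω hω hωE
    have hXn := dirSeq_eq_of_mem_inBlock (t := fun k => T k ω) (n := n) (j := j)
      (fun i hi => by have := hω i hi; omega)
    constructor
    · rintro ⟨⟨h2, h1⟩, hb⟩
      exact ⟨hωE.1 ⟨h2, hb⟩, hXn hb ▸ h1⟩
    · rintro ⟨he, h1⟩
      obtain ⟨h2, hb⟩ := hωE.2 he
      exact ⟨⟨h2, (hXn hb).trans h1⟩, hb⟩
  calc _ = μ (E ∩ T (j + 1) ⁻¹' {1}) := measure_congr (eventuallyEq_set.2 hEB)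
    _ = μ E * μ (T (j + 1) ⁻¹' {1}) :=
      hindep.measure_inter_preimage_succ_eq_mul hmeas j 1
        ((measurable_dirSeq m (measurableSet_singleton 2)).inter (measurableSet_inBlock n j))
        (measurableSet_singleton 1)
    _ = ENNReal.ofReal p * μ E := by
      rw [mul_comm]
      exact congrArg (· * μ E) (h1 (j + 1) (Nat.le_add_left 1 j))
    _ = _ := congrArg _ (measure_congr (eventuallyEq_set.2 hE)).symm

end Probability

theorem stmt11_general {Ω : Type*} [MeasurableSpace Ω] (μ : Measure Ω)
    [IsProbabilityMeasure μ] (p : ℝ)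
    (T : ℕ → Ω → ℕ) (hmeas : ∀ n, Measurable (T n))
    (hindep : iIndepFun T μ)
    (h1 : ∀ n, 1 ≤ n → μ {ω | T n ω = 1} = ENNReal.ofReal p)
    (h2 : ∀ n, 1 ≤ n → μ {ω | T n ω = 2} = ENNReal.ofReal (1 - p)) :
    ∀ m n, 1 ≤ m → m + 2 ≤ n →
      μ ({ω | dirSeq (fun k => T k ω) m = 2} ∩ {ω | dirSeq (fun k => T k ω) n = 1})
        = ENNReal.ofReal p * μ {ω | dirSeq (fun k => T k ω) m = 2} := by
  intro m n hm hmn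
  have hY : Measurable fun ω k => T k ω := measurable_pi_lambda _ hmeas
  have hA : MeasurableSet {ω | dirSeq (fun k => T k ω) m = 2} :=
    (measurable_dirSeq m).comp hY (measurableSet_singleton 2)
  have hB : MeasurableSet {ω | dirSeq (fun k => T k ω) n = 1} :=
    (measurable_dirSeq n).comp hY (measurableSet_singleton 1)
  rw [measure_eq_sum_inter_inBlock hY (hA.inter hB) (n := n) (by omega),
    measure_eq_sum_inter_inBlock hY hA (n := n) (by omega), Finset.mul_sum]
  exact Finset.sum_congr rfl fun j _ => measure_inter_inBlock_eq_mul hmeas hindep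
    (ae_eq_one_or_eq_two hmeas h1 h2) h1 hm hmn j

/-- for an i.i.d. directing sequence over {1,2} with
P(T_n = 1) = p ∈ (0,1): for m ≥ 1 and n ≥ m+2,
P(X_m = 2 and X_n = 1) = p · P(X_m = 2). -/
theorem stmt11 {Ω : Type*} [MeasurableSpace Ω] (μ : Measure Ω)
    [IsProbabilityMeasure μ] (p : ℝ) (hp : p ∈ Set.Ioo (0 : ℝ) 1)
    (T : ℕ → Ω → ℕ) (hmeas : ∀ n, Measurable (T n))
    (hindep : iIndepFun T μ)
    (h1 : ∀ n, 1 ≤ n → μ {ω | T n ω = 1} = ENNReal.ofReal p)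
    (h2 : ∀ n, 1 ≤ n → μ {ω | T n ω = 2} = ENNReal.ofReal (1 - p)) :
    ∀ m n, 1 ≤ m → m + 2 ≤ n →
      μ ({ω | dirSeq (fun k => T k ω) m = 2} ∩ {ω | dirSeq (fun k => T k ω) n = 1})
        = ENNReal.ofReal p * μ {ω | dirSeq (fun k => T k ω) m = 2} :=
  stmt11_general μ p T hmeas hindep h1 h2
end

section
/- Consider the simultaneous construction: T^(1) = (2), O^(1) = 22, and iteratively each block of O of size 2 is filled with 1's while blocks of size 1 are filled alternately with 1 and 2 (starting with 1), with T recording the fill letters. If the density d of 1's in T = lim T^(n) exists, then d satisfies the system d_O = (3d − 1)/(2d) and d = (1 − d_O) + d_O/2 where d_O is the density of 1's in O_T; hence d = (1 + √17)/8 and d_O = (7 − √17)/4, so d ≠ d_O. -/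
/-- One step of the simultaneous construction (Program 2): if the current
(0-indexed) `i`-th letter of `O` is 2 the corresponding block is filled with
1,1; otherwise it is a block of size 1 filled with the alternating digit `d`. -/
def simStep : List ℕ × List ℕ × ℕ → ℕ → List ℕ × List ℕ × ℕ
  | (t, o, d), i =>
    if o.getD i 0 = 2 then (t ++ [1], o ++ [1, 1], d)
    else (t ++ [d], o ++ [d], 3 - d)

/-- State (T, O, next alternating digit) after `n` loop iterations, starting
from T = (2), O = 2,2, d = 1. -/
def simState : ℕ → List ℕ × List ℕ × ℕ
  | 0 => ([2], [2, 2], 1)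
  | n + 1 => simStep (simState n) (n + 1)

/-- The n-th letter (1-indexed) of the directing sequence T of the
simultaneous construction. -/
def simT (n : ℕ) : ℕ := (simState n).1.getD (n - 1) 0

/-- The n-th letter (1-indexed) of the directed sequence O_T of the
simultaneous construction. -/
def simO (n : ℕ) : ℕ := (simState n).2.1.getD (n - 1) 0

/-- Frequency of 1's among the first n letters of f (read at indices 1,…,n). -/
noncomputable def freqOnes (f : ℕ → ℕ) (n : ℕ) : ℝ :=
  ((Finset.Icc 1 n).filter (fun k => f k = 1)).card / n

/-!
After `n` steps the construction has produced `n + 1` letters of `T` and `L = |O| ≥ n + 2` letters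
of `O`, and a loop invariant counting 2's gives, with `d ∈ {1, 2}` the next alternating letter
and `#₁(X, m)` the number of 1's among the first `m` letters of `X`,
`2 #₁(T, n + 1) + 3 = L + d`, `#₁(O, n + 1) + L = 2n + 2` and `2 #₁(O, L) + 2n + 7 = 3L + d`.
Dividing by `n`, the first identity gives `L / n → 2 dT`, the second `dO = 2 - 2 dT`, and computing
`#₁(O, L) / n` once as `(#₁(O, L) / L) (L / n) → dO · 2 dT` and once from the third identity
gives `dO · 2 dT = 3 dT - 1`, i.e. `4 dT² - dT - 1 = 0`.
-/

open Filter Topology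

lemma List.count_one_add_count_two {l : List ℕ} (h : ∀ x ∈ l, x = 1 ∨ x = 2) :
    l.count 1 + l.count 2 = l.length := by
  induction l with
  | nil => rfl
  | cons a l ih =>
    have := ih fun x hx => h x (List.mem_cons_of_mem a hx)
    rcases h a List.mem_cons_self with rfl | rfl <;>
      simp only [List.count_cons_self, List.count_cons_of_ne (by decide : (1 : ℕ) ≠ 2),
        List.count_cons_of_ne (by decide : (2 : ℕ) ≠ 1), List.length_cons] <;> omega

/-- The loop invariant after `n` steps for the state `(T, O, d)`: every 2 read in `O` opens a
block of length 2, and every 2 written to `T` after the first is also written to `O`. -/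
structure SimInvariant (n : ℕ) (p : List ℕ × List ℕ × ℕ) : Prop where
  length_fst : p.1.length = n + 1
  le_length_snd : n + 2 ≤ p.2.1.length
  count_two_take_snd : (p.2.1.take (n + 1)).count 2 + n + 1 = p.2.1.length
  count_two_snd : p.2.1.count 2 = p.1.count 2 + 1
  count_two_fst : 2 * p.1.count 2 + p.2.2 + p.2.1.length = 2 * n + 5
  digit : p.2.2 = 1 ∨ p.2.2 = 2
  binary_fst : ∀ x ∈ p.1, x = 1 ∨ x = 2
  binary_snd : ∀ x ∈ p.2.1, x = 1 ∨ x = 2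

lemma SimInvariant.step {n : ℕ} {p : List ℕ × List ℕ × ℕ} (h : SimInvariant n p) :
    SimInvariant (n + 1) (simStep p (n + 1)) := by
  obtain ⟨t, o, d⟩ := p
  obtain ⟨hT, hO, htake, hO2, hT2, hd, hTbin, hObin⟩ := h
  dsimp only at *
  have hlt : n + 1 < o.length := by omega
  have hget : o.getD (n + 1) 0 = o[n + 1] := List.getD_eq_getElem _ _ hlt
  have htake' : o.take (n + 2) = o.take (n + 1) ++ [o[n + 1]] := by
    rw [List.take_add_one, List.getElem?_eq_getElem hlt]; rfl
  have hone : [1].count 2 = 0 := rfl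
  rcases hObin _ (List.getElem_mem hlt) with hx | hx
  · have hstep : simStep (t, o, d) (n + 1) = (t ++ [d], o ++ [d], 3 - d) := by
      rw [simStep, hget, hx]; rfl
    have hd2 : [d].count 2 + 2 = d + 1 := by rcases hd with rfl | rfl <;> rfl
    rw [hstep]
    refine ⟨?_, ?_, ?_, ?_, ?_, ?_, ?_, ?_⟩ <;> dsimp only
    · simp [hT]
    · simp only [List.length_append, List.length_singleton]; omega
    · rw [List.take_append_of_le_length (by omega), htake', List.count_append, hx,
        List.length_append, List.length_singleton]; omega
    · rw [List.count_append, List.count_append, hO2]; omega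
    · rw [List.count_append, List.length_append, List.length_singleton]; omega
    · omega
    · simpa [or_imp, forall_and] using ⟨hTbin, hd⟩
    · simpa [or_imp, forall_and] using ⟨hObin, hd⟩
  · have hstep : simStep (t, o, d) (n + 1) = (t ++ [1], o ++ [1, 1], d) := by
      rw [simStep, hget, hx]; rfl
    have htwo : [2].count 2 = 1 := rfl
    have hone_one : [1, 1].count 2 = 0 := rfl
    rw [hstep]
    refine ⟨?_, ?_, ?_, ?_, ?_, hd, ?_, ?_⟩ <;> dsimp only
    · simp [hT]
    · simp only [List.length_append, List.length_cons, List.length_nil]; omega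
    · rw [List.take_append_of_le_length (by omega), htake', List.count_append, hx,
        List.length_append, List.length_cons, List.length_cons, List.length_nil]; omega
    · rw [List.count_append, List.count_append, hO2]; omega
    · rw [List.count_append, List.length_append, List.length_cons, List.length_cons,
        List.length_nil]; omega
    · simpa [or_imp, forall_and] using hTbin
    · simpa [or_imp, forall_and] using hObin

lemma simInvariant_simState (n : ℕ) : SimInvariant n (simState n) := by
  induction n with
  | zero => exact ⟨rfl, le_rfl, rfl, rfl, rfl, .inl rfl, by decide, by decide⟩
  | succ n ih => exact ih.step

lemma prefix_simStep (p : List ℕ × List ℕ × ℕ) (i : ℕ) :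
    p.1 <+: (simStep p i).1 ∧ p.2.1 <+: (simStep p i).2.1 := by
  obtain ⟨t, o, d⟩ := p
  simp only [simStep]
  split_ifs <;> exact ⟨List.prefix_append _ _, List.prefix_append _ _⟩

lemma simState_prefix {m n : ℕ} (h : m ≤ n) :
    (simState m).1 <+: (simState n).1 ∧ (simState m).2.1 <+: (simState n).2.1 := by
  induction n, h using Nat.le_induction with
  | base => exact ⟨List.prefix_rfl, List.prefix_rfl⟩
  | succ n _ ih =>
    have hstep := prefix_simStep (simState n) (n + 1)
    exact ⟨ih.1.trans hstep.1, ih.2.trans hstep.2⟩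

lemma List.IsPrefix.getD_eq {α : Type*} {l₁ l₂ : List α} (h : l₁ <+: l₂) {i : ℕ}
    (hi : i < l₁.length) (x : α) : l₂.getD i x = l₁.getD i x := by
  rw [List.getD_eq_getElem _ _ hi, List.getD_eq_getElem _ _ (hi.trans_le h.length_le),
    h.getElem hi]

lemma simT_eq_getD {n k : ℕ} (hk : k ≤ n + 1) : simT k = (simState n).1.getD (k - 1) 0 := by
  have hlen (m : ℕ) := (simInvariant_simState m).length_fst
  rcases le_total k n with h | h
  · exact ((simState_prefix h).1.getD_eq (by rw [hlen]; omega) 0).symm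
  · exact (simState_prefix h).1.getD_eq (by rw [hlen]; omega) 0

lemma simO_eq_getD {n k : ℕ} (hk : k ≤ (simState n).2.1.length) :
    simO k = (simState n).2.1.getD (k - 1) 0 := by
  have hlen (m : ℕ) := (simInvariant_simState m).le_length_snd
  rcases le_total k n with h | h
  · exact ((simState_prefix h).2.getD_eq (by have := hlen k; omega) 0).symm
  · exact (simState_prefix h).2.getD_eq (by have := hlen n; omega) 0

def countOnes (f : ℕ → ℕ) (n : ℕ) : ℕ := ((Finset.Icc 1 n).filter (fun k => f k = 1)).card

lemma countOnes_succ (f : ℕ → ℕ) (n : ℕ) :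
    countOnes f (n + 1) = countOnes f n + if f (n + 1) = 1 then 1 else 0 := by
  rw [countOnes, countOnes, ← Finset.insert_Icc_right_eq_Icc_add_one (by omega),
    Finset.filter_insert]
  split_ifs
  · exact Finset.card_insert_of_notMem (by simp)
  · rfl

lemma countOnes_eq_count_take {f : ℕ → ℕ} {l : List ℕ} {n : ℕ} (hn : n ≤ l.length)
    (hf : ∀ k ≤ n, f k = l.getD (k - 1) 0) : countOnes f n = (l.take n).count 1 := by
  induction n with
  | zero => rfl
  | succ n ih =>
    have hlt : n < l.length := hn
    rw [countOnes_succ, ih (by omega) fun k hk => hf k (by omega), List.take_add_one,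
      List.getElem?_eq_getElem hlt, hf (n + 1) le_rfl, Nat.add_sub_cancel,
      List.getD_eq_getElem _ _ hlt, Option.toList_some, List.count_append]
    split_ifs with h <;> simp [h]

lemma countOnes_simT_succ (n : ℕ) :
    2 * countOnes simT (n + 1) + 3 = (simState n).2.1.length + (simState n).2.2 := by
  have h := simInvariant_simState n
  have hbin := List.count_one_add_count_two h.binary_fst
  rw [countOnes_eq_count_take (h.length_fst ▸ le_rfl) fun k hk => simT_eq_getD hk,
    List.take_of_length_le (h.length_fst ▸ le_rfl)]
  have := h.count_two_fst
  have := h.length_fst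
  omega

lemma countOnes_simO_succ (n : ℕ) :
    countOnes simO (n + 1) + (simState n).2.1.length = 2 * n + 2 := by
  have h := simInvariant_simState n
  have hL := h.le_length_snd
  have hbin := List.count_one_add_count_two (l := (simState n).2.1.take (n + 1))
    fun x hx => h.binary_snd x (List.mem_of_mem_take hx)
  rw [List.length_take_of_le (by omega)] at hbin
  rw [countOnes_eq_count_take (by omega) fun k hk => simO_eq_getD (n := n) (by omega)]
  have := h.count_two_take_snd
  omega

lemma countOnes_simO_length (n : ℕ) :
    2 * countOnes simO (simState n).2.1.length + 2 * n + 7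
      = 3 * (simState n).2.1.length + (simState n).2.2 := by
  have h := simInvariant_simState n
  have hbin := List.count_one_add_count_two h.binary_snd
  rw [countOnes_eq_count_take le_rfl fun k hk => simO_eq_getD hk, List.take_length]
  have := h.count_two_snd
  have := h.count_two_fst
  omega

lemma tendsto_div_of_abs_sub_affine_le {a b : ℕ → ℝ} {x p q C : ℝ}
    (ha : Tendsto (fun n => a n / n) atTop (𝓝 x)) (hb : ∀ n, |b n - (p * a n + q * n)| ≤ C) :
    Tendsto (fun n => b n / n) atTop (𝓝 (p * x + q)) := by
  have herr : Tendsto (fun n : ℕ => (b n - (p * a n + q * n)) / n) atTop (𝓝 0) := by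
    refine squeeze_zero_norm (fun n => ?_) (tendsto_const_div_atTop_nhds_zero_nat C)
    rw [norm_div, Real.norm_eq_abs, Real.norm_natCast]
    exact div_le_div_of_nonneg_right (hb n) n.cast_nonneg
  rw [← add_zero (p * x + q)]
  refine ((ha.const_mul p).add_const q).add herr |>.congr' ?_
  filter_upwards [eventually_ne_atTop 0] with n hn
  field_simp
  ring

lemma freqOnes_eq (f : ℕ → ℕ) : freqOnes f = fun n => (countOnes f n : ℝ) / n := rfl

lemma abs_countOnes_succ_sub_le (f : ℕ → ℕ) (n : ℕ) :
    |(countOnes f (n + 1) : ℝ) - countOnes f n| ≤ 1 := by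
  rw [countOnes_succ]
  split_ifs <;> norm_num

lemma simState_digit_mem_Icc (n : ℕ) : ((simState n).2.2 : ℝ) ∈ Set.Icc 1 2 := by
  rcases (simInvariant_simState n).digit with h | h <;> norm_num [h]

section Densities

variable {dT : ℝ} (hdT : Tendsto (freqOnes simT) atTop (𝓝 dT))
include hdT

lemma tendsto_length_simO_div :
    Tendsto (fun n => ((simState n).2.1.length : ℝ) / n) atTop (𝓝 (2 * dT)) := by
  have hT : Tendsto (fun n => (countOnes simT (n + 1) : ℝ) / n) atTop (𝓝 dT) := by
    simpa using tendsto_div_of_abs_sub_affine_le (p := 1) (q := 0) (freqOnes_eq simT ▸ hdT)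
      fun n => by simpa using abs_countOnes_succ_sub_le simT n
  have hL (n : ℕ) :
      |((simState n).2.1.length : ℝ) - (2 * countOnes simT (n + 1) + 0 * n)| ≤ 2 := by
    have h := countOnes_simT_succ n
    obtain ⟨h1, h2⟩ := simState_digit_mem_Icc n
    rify at h
    rw [abs_le]; constructor <;> linarith
  simpa using tendsto_div_of_abs_sub_affine_le hT hL

lemma tendsto_freqOnes_simO : Tendsto (freqOnes simO) atTop (𝓝 (2 - 2 * dT)) := by
  have hb (n : ℕ) :
      |(countOnes simO (n + 1) : ℝ) - (-1 * (simState n).2.1.length + 2 * n)| ≤ 2 := by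
    have h := countOnes_simO_succ n
    rify at h
    rw [abs_le]; constructor <;> linarith
  have hO : Tendsto (fun n => (countOnes simO (n + 1) : ℝ) / n) atTop (𝓝 (2 - 2 * dT)) := by
    convert tendsto_div_of_abs_sub_affine_le (tendsto_length_simO_div hdT) hb using 2; ring
  simpa [freqOnes_eq] using tendsto_div_of_abs_sub_affine_le (p := 1) (q := 0) hO
    fun n => by simpa [abs_sub_comm] using abs_countOnes_succ_sub_le simO n

lemma tendsto_countOnes_simO_length_div :
    Tendsto (fun n => (countOnes simO (simState n).2.1.length : ℝ) / n) atTop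
      (𝓝 (3 * dT - 1)) := by
  have hb (n : ℕ) : |(countOnes simO (simState n).2.1.length : ℝ)
      - (3 / 2 * (simState n).2.1.length + -1 * n)| ≤ 3 := by
    have h := countOnes_simO_length n
    obtain ⟨h1, h2⟩ := simState_digit_mem_Icc n
    rify at h
    rw [abs_le]; constructor <;> linarith
  convert tendsto_div_of_abs_sub_affine_le (tendsto_length_simO_div hdT) hb using 2; ring

lemma two_sub_two_mul_mul_eq_three_mul_sub_one : (2 - 2 * dT) * (2 * dT) = 3 * dT - 1 := by
  have hL : Tendsto (fun n => (simState n).2.1.length) atTop atTop :=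
    tendsto_atTop_mono (fun n => (simInvariant_simState n).le_length_snd.trans' (by simp))
      tendsto_id
  refine tendsto_nhds_unique (((tendsto_freqOnes_simO hdT).comp hL).mul
    (tendsto_length_simO_div hdT) |>.congr' ?_) (tendsto_countOnes_simO_length_div hdT)
  filter_upwards [eventually_ne_atTop 0] with n hn
  have : ((simState n).2.1.length : ℝ) ≠ 0 :=
    Nat.cast_ne_zero.2 (by have := (simInvariant_simState n).le_length_snd; omega)
  simp only [freqOnes_eq, Function.comp_apply]
  field_simp

end Densities

lemma eq_of_four_mul_sq_sub_sub_one_eq_zero {x : ℝ} (hx : 0 ≤ x) (h : 4 * x ^ 2 - x - 1 = 0) :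
    x = (1 + √17) / 8 := by
  have hs : √17 ^ 2 = 17 := Real.sq_sqrt (by norm_num)
  have hfac : (8 * x - 1 - √17) * (8 * x - 1 + √17) = 0 := by linear_combination 16 * h - hs
  rcases mul_eq_zero.1 hfac with h' | h'
  · linarith
  · nlinarith [Real.sqrt_nonneg 17]

/-- if the density dT of 1's in the simultaneously constructed
directing sequence T exists, then the density dO of 1's in O_T exists, the
pair satisfies dO = (3dT-1)/(2dT) and dT = (1-dO) + dO/2, whence
dT = (1+√17)/8, dO = (7-√17)/4, and dT ≠ dO. -/
theorem stmt18 (dT : ℝ)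
    (hdT : Filter.Tendsto (freqOnes simT) Filter.atTop (nhds dT)) :
    ∃ dO : ℝ, Filter.Tendsto (freqOnes simO) Filter.atTop (nhds dO) ∧
      dO = (3 * dT - 1) / (2 * dT) ∧ dT = (1 - dO) + dO / 2 ∧
      dT = (1 + Real.sqrt 17) / 8 ∧ dO = (7 - Real.sqrt 17) / 4 ∧ dT ≠ dO := by
  have hrel := two_sub_two_mul_mul_eq_three_mul_sub_one hdT
  have hdT0 : 0 ≤ dT := ge_of_tendsto' hdT fun n => by rw [freqOnes_eq]; positivity
  have hval := eq_of_four_mul_sq_sub_sub_one_eq_zero hdT0 (by linarith)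
  refine ⟨2 - 2 * dT, tendsto_freqOnes_simO hdT, ?_, by ring, hval, by rw [hval]; ring, ?_⟩
  · rw [eq_div_iff (by rw [hval]; positivity)]; linarith
  · intro h
    have : dT = 2 / 3 := by linarith
    norm_num [this] at hrel
end
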